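/- arXiv:0906.2527 — 7 statements merged into one kernel-verified Lean document; each statement's English description precedes it below -/
import Mathlib

section
/- Let E_1,…,E_n be d′×d complex matrices with ∑_{k=1}^n E_k† E_k = I_d, defining the quantum channel E(ρ) = ∑_k E_k ρ E_k†. Then there exist unit vectors ψ, φ ∈ ℂ^d with tr[E(|ψ⟩⟨ψ|)·E(|φ⟩⟨φ|)] = 0 if and only if there exist nonzero vectors u, v ∈ ℂ^d such that tr(E_k† E_l · u v†) = 0 for all 1 ≤ k, l ≤ n (i.e. the orthogonal complement of span{E_k† E_l} contains a nonzero rank-one matrix). -/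
/-!
Writing `E(|ψ⟩⟨ψ|) = ∑ₖ |Eₖψ⟩⟨Eₖψ|`, the trace `tr[E(|ψ⟩⟨ψ|) E(|φ⟩⟨φ|)]` expands to
`∑ₖₗ |⟨ψ, Eₖ† Eₗ φ⟩|²`, a sum of squares. It vanishes iff `⟨ψ, Eₖ† Eₗ φ⟩ = tr(Eₖ† Eₗ |φ⟩⟨ψ|) = 0`
for all `k, l`, i.e. iff `|φ⟩⟨ψ|` is orthogonal to every `Eₖ† Eₗ`. This condition is invariant
under rescaling, so nonzero `u, v` can be normalized to unit vectors.
-/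

open Matrix

/-- The quantum channel associated with a Kraus family: `ρ ↦ ∑ k, E k * ρ * (E k)ᴴ`. -/
noncomputable def channelApply {n d d' : ℕ} (E : Fin n → Matrix (Fin d') (Fin d) ℂ)
    (ρ : Matrix (Fin d) (Fin d) ℂ) : Matrix (Fin d') (Fin d') ℂ :=
  ∑ k, E k * ρ * (E k)ᴴ

section RankOne

variable {R : Type*} [CommRing R] {m n : Type*} [Fintype n]

theorem Matrix.trace_mul_vecMulVec [Fintype m] (M : Matrix m n R) (x : n → R) (y : m → R) :
    (M * vecMulVec x y).trace = y ⬝ᵥ M *ᵥ x := by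
  rw [mul_vecMulVec, trace_vecMulVec, dotProduct_comm]

theorem Matrix.mul_vecMulVec_star_mul_conjTranspose [StarRing R] (A : Matrix m n R) (x : n → R) :
    A * vecMulVec x (star x) * Aᴴ = vecMulVec (A *ᵥ x) (star (A *ᵥ x)) := by
  rw [mul_vecMulVec, vecMulVec_mul, star_mulVec]

theorem Matrix.trace_vecMulVec_star_mul_vecMulVec_star [StarRing R] (a c : n → R) :
    (vecMulVec a (star a) * vecMulVec c (star c)).trace
      = star (star a ⬝ᵥ c) * (star a ⬝ᵥ c) := by
  rw [vecMulVec_mul_vecMulVec, trace_vecMulVec, dotProduct_smul, smul_eq_mul, star_dotProduct,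
    star_star, dotProduct_comm, mul_comm]

end RankOne

theorem exists_smul_dotProduct_star_self_eq_one {𝕜 : Type*} [RCLike 𝕜] {n : Type*} [Fintype n]
    {v : n → 𝕜} (hv : v ≠ 0) : ∃ c : 𝕜, star (c • v) ⬝ᵥ (c • v) = 1 := by
  open scoped ComplexOrder in
  obtain ⟨r, hr, hrv⟩ := RCLike.pos_iff_exists_ofReal.mp (dotProduct_star_self_pos_iff.mpr hv)
  refine ⟨((√r)⁻¹ : ℝ), ?_⟩
  rw [star_smul, smul_dotProduct, dotProduct_smul, ← hrv, RCLike.star_def, RCLike.conj_ofReal,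
    smul_eq_mul, smul_eq_mul, ← mul_assoc, ← RCLike.ofReal_mul, ← RCLike.ofReal_mul, ← mul_inv,
    Real.mul_self_sqrt hr.le, inv_mul_cancel₀ hr.ne', RCLike.ofReal_one]

theorem channelApply_vecMulVec_star {n d d' : ℕ} (E : Fin n → Matrix (Fin d') (Fin d) ℂ)
    (ψ : Fin d → ℂ) :
    channelApply E (vecMulVec ψ (star ψ)) = ∑ k, vecMulVec (E k *ᵥ ψ) (star (E k *ᵥ ψ)) := by
  simp only [channelApply, mul_vecMulVec_star_mul_conjTranspose]

theorem trace_channelApply_mul_channelApply {n d d' : ℕ} (E : Fin n → Matrix (Fin d') (Fin d) ℂ)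
    (ψ φ : Fin d → ℂ) :
    (channelApply E (vecMulVec ψ (star ψ)) * channelApply E (vecMulVec φ (star φ))).trace
      = let z : Fin n × Fin n → ℂ := fun kl => star ψ ⬝ᵥ ((E kl.1)ᴴ * E kl.2) *ᵥ φ
        star z ⬝ᵥ z := by
  have hz : ∀ k l, star (E k *ᵥ ψ) ⬝ᵥ E l *ᵥ φ = star ψ ⬝ᵥ ((E k)ᴴ * E l) *ᵥ φ := by
    intro k l
    rw [star_mulVec, ← dotProduct_mulVec, mulVec_mulVec]
  simp only [channelApply_vecMulVec_star, Finset.sum_mul_sum, trace_sum,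
    trace_vecMulVec_star_mul_vecMulVec_star, hz]
  simp only [dotProduct, Pi.star_apply, Fintype.sum_prod_type]

theorem trace_channelApply_mul_channelApply_eq_zero_iff {n d d' : ℕ}
    (E : Fin n → Matrix (Fin d') (Fin d) ℂ) (ψ φ : Fin d → ℂ) :
    (channelApply E (vecMulVec ψ (star ψ)) * channelApply E (vecMulVec φ (star φ))).trace = 0
      ↔ ∀ k l, star ψ ⬝ᵥ ((E k)ᴴ * E l) *ᵥ φ = 0 := by
  open scoped ComplexOrder in
  rw [trace_channelApply_mul_channelApply, dotProduct_star_self_eq_zero, funext_iff,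
    Prod.forall]
  rfl

theorem stmt_0_general {n d d' : ℕ} (E : Fin n → Matrix (Fin d') (Fin d) ℂ) :
    (∃ ψ φ : Fin d → ℂ, star ψ ⬝ᵥ ψ = 1 ∧ star φ ⬝ᵥ φ = 1 ∧
        (channelApply E (vecMulVec ψ (star ψ)) *
          channelApply E (vecMulVec φ (star φ))).trace = 0) ↔
    (∃ u v : Fin d → ℂ, u ≠ 0 ∧ v ≠ 0 ∧
        ∀ k l, ((E k)ᴴ * E l * vecMulVec u (star v)).trace = 0) := by
  simp only [trace_channelApply_mul_channelApply_eq_zero_iff, trace_mul_vecMulVec]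
  constructor
  · rintro ⟨ψ, φ, hψ, hφ, h⟩
    refine ⟨φ, ψ, ?_, ?_, h⟩ <;> rintro rfl <;> simp_all
  · rintro ⟨u, v, hu, hv, h⟩
    obtain ⟨a, ha⟩ := exists_smul_dotProduct_star_self_eq_one hv
    obtain ⟨b, hb⟩ := exists_smul_dotProduct_star_self_eq_one hu
    refine ⟨a • v, b • u, ha, hb, fun k l => ?_⟩
    rw [mulVec_smul, dotProduct_smul, star_smul, smul_dotProduct, h k l, smul_zero, smul_zero]

/-- there are unit vectors with orthogonal channel outputs iff the
orthogonal complement of `span {E_k† E_l}` contains a nonzero rank-one matrix. -/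
theorem stmt_0 {n d d' : ℕ} (E : Fin n → Matrix (Fin d') (Fin d) ℂ)
    (hE : ∑ k, (E k)ᴴ * E k = 1) :
    (∃ ψ φ : Fin d → ℂ, star ψ ⬝ᵥ ψ = 1 ∧ star φ ⬝ᵥ φ = 1 ∧
        (channelApply E (vecMulVec ψ (star ψ)) *
          channelApply E (vecMulVec φ (star φ))).trace = 0) ↔
    (∃ u v : Fin d → ℂ, u ≠ 0 ∧ v ≠ 0 ∧
        ∀ k l, ((E k)ᴴ * E l * vecMulVec u (star v)).trace = 0) :=
  stmt_0_general E
end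

section
/- Let M be a linear subspace of the d×d complex matrices with M† = M and I_d ∈ M. Then there exist finitely many positive definite matrices F_0, F_1, …, F_n ∈ M such that ∑_{k=0}^n F_k = I_d and span{F_0, F_1, …, F_n} = M. -/
/-!
Since `M` is closed under `†`, it is spanned by Hermitian matrices `H₁, …, Hₙ` (real and
imaginary parts of its elements). Completing them by `K₀ = -∑ Hᵢ` gives Hermitian `K₀, …, Kₙ`
spanning `M` with `∑ Kⱼ = 0`. For `c = 1/(n+1)` and `δ > 0` with `δ ‖Kⱼ‖ < c` (operator norm),
`Fⱼ = c I + δ Kⱼ` is positive definite, the `Fⱼ` sum to `I`, and their span contains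
`I = ∑ Fⱼ`, hence every `Kⱼ = δ⁻¹ (Fⱼ - c I)`.
-/
open Matrix
open scoped ComplexOrder

theorem sum_smul_add_smul_of_sum_eq_zero {R V ι : Type*} [Semiring R] [AddCommMonoid V]
    [Module R V] [Fintype ι] (x : V) {K : ι → V} (hK : ∑ j, K j = 0) (a b : R) :
    ∑ j, (a • x + b • K j) = ((Fintype.card ι : R) * a) • x := by
  simp only [Finset.sum_add_distrib, Finset.sum_const, Finset.card_univ, ← Finset.smul_sum, hK,
    smul_zero, add_zero, mul_smul, Nat.cast_smul_eq_nsmul]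

namespace Submodule

open ComplexStarModule

variable {A : Type*} [AddCommGroup A] [Module ℂ A] [StarAddMonoid A] [StarModule ℂ A]

theorem span_setOf_isSelfAdjoint_eq {M : Submodule ℂ A} (hM : ∀ x ∈ M, star x ∈ M) :
    span ℂ {x | x ∈ M ∧ IsSelfAdjoint x} = M := by
  refine le_antisymm (span_le.mpr fun x hx => hx.1) fun x hx => ?_
  have hre : (ℜ x : A) ∈ M := by
    rw [realPart_apply_coe]
    exact M.smul_of_tower_mem _ (M.add_mem hx (hM x hx))
  have him : (ℑ x : A) ∈ M := by
    rw [imaginaryPart_apply_coe]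
    exact M.smul_mem _ (M.smul_of_tower_mem _ (M.sub_mem hx (hM x hx)))
  rw [← realPart_add_I_smul_imaginaryPart x]
  exact add_mem (subset_span ⟨hre, (ℜ x).2⟩) (smul_mem _ _ (subset_span ⟨him, (ℑ x).2⟩))

theorem exists_isSelfAdjoint_sum_eq_zero_span_eq [FiniteDimensional ℂ A] {M : Submodule ℂ A}
    (hM : ∀ x ∈ M, star x ∈ M) :
    ∃ (n : ℕ) (K : Fin (n + 1) → A),
      (∀ j, IsSelfAdjoint (K j)) ∧ ∑ j, K j = 0 ∧ span ℂ (Set.range K) = M := by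
  obtain ⟨H, hH, hH_span, -⟩ :=
    exists_fun_fin_finrank_span_eq ℂ {x | x ∈ M ∧ IsSelfAdjoint x}
  replace hH_span := hH_span.trans (span_setOf_isSelfAdjoint_eq hM)
  refine ⟨_, Fin.cons (-∑ i, H i) H, Fin.cases ?_ fun i => (hH i).2,
    by simp [Fin.sum_univ_succ], ?_⟩
  · rw [Fin.range_cons, span_insert_eq_span, hH_span]
    exact neg_mem (sum_mem fun i _ => subset_span ⟨i, rfl⟩)
  · simpa using (isSelfAdjoint_sum _ fun i _ => (hH i).2).neg

theorem span_range_smul_add_smul_eq {R V ι : Type*} [Field R] [AddCommGroup V] [Module R V]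
    [Fintype ι] (x : V) {K : ι → V} (hK : ∑ j, K j = 0) {a b : R}
    (ha : (Fintype.card ι : R) * a ≠ 0) (hb : b ≠ 0) :
    span R (Set.range fun j => a • x + b • K j) = span R (insert x (Set.range K)) := by
  set F := fun j => a • x + b • K j
  have hsum : ∑ j, F j = ((Fintype.card ι : R) * a) • x :=
    sum_smul_add_smul_of_sum_eq_zero x hK a b
  have hx : x ∈ span R (Set.range F) := by
    rw [← inv_smul_smul₀ ha x, ← hsum]
    exact smul_mem _ _ (sum_mem fun j _ => subset_span ⟨j, rfl⟩)
  refine le_antisymm (span_le.mpr ?_) (span_le.mpr (Set.insert_subset_iff.mpr ⟨hx, ?_⟩))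
  · rintro _ ⟨j, rfl⟩
    exact add_mem (smul_mem _ _ (subset_span (Set.mem_insert x _)))
      (smul_mem _ _ (subset_span (Set.mem_insert_of_mem x ⟨j, rfl⟩)))
  · rintro _ ⟨j, rfl⟩
    have hKj : K j = b⁻¹ • (F j - a • x) := by simp [F, inv_smul_smul₀ hb]
    rw [hKj]
    exact smul_mem _ _ (sub_mem (subset_span ⟨j, rfl⟩) (smul_mem _ _ hx))

end Submodule

section
open scoped Matrix.Norms.L2Operator MatrixOrder

theorem Matrix.IsHermitian.posDef_smul_one_add {n : Type*} [Fintype n] [DecidableEq n]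
    {K : Matrix n n ℂ} (hK : K.IsHermitian) {s : ℝ} (hs : ‖K‖ < s) :
    ((s : ℂ) • 1 + K).PosDef := by
  have hnonneg : (algebraMap ℝ _ ‖K‖ + K).PosSemidef := nonneg_iff_posSemidef.mp
    (neg_le_iff_add_nonneg'.mp hK.isSelfAdjoint.neg_algebraMap_norm_le_self)
  have hpos : ((s - ‖K‖ : ℝ) • (1 : Matrix n n ℂ)).PosDef := PosDef.one.smul (sub_pos.mpr hs)
  convert hpos.add_posSemidef hnonneg using 1
  rw [Algebra.algebraMap_eq_smul_one, ← add_assoc, ← add_smul, sub_add_cancel, Complex.coe_smul]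

theorem Matrix.exists_posDef_smul_one_add_smul {n ι : Type*} [Fintype n] [DecidableEq n]
    [Fintype ι] {K : ι → Matrix n n ℂ} (hK : ∀ j, (K j).IsHermitian) {c : ℝ} (hc : 0 < c) :
    ∃ δ : ℝ, 0 < δ ∧ ∀ j, ((c : ℂ) • 1 + (δ : ℂ) • K j).PosDef := by
  set s := 1 + ∑ j, ‖K j‖
  have hs : 0 < s := by positivity
  refine ⟨c / s, by positivity, fun j => ?_⟩
  have hKj : ‖K j‖ < s := by
    have := Finset.single_le_sum (fun i _ => norm_nonneg (K i)) (Finset.mem_univ j)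
    linarith
  have : (c : ℂ) • 1 + ((c / s : ℝ) : ℂ) • K j = ((c / s : ℝ) : ℂ) • ((s : ℂ) • 1 + K j) := by
    rw [smul_add, smul_smul, ← Complex.ofReal_mul, div_mul_cancel₀ c hs.ne']
  rw [this]
  exact ((hK j).posDef_smul_one_add hKj).smul (by positivity)

end

/-- a subspace `M` of `d × d` matrices with `M† = M` and `I ∈ M` is spanned
by finitely many positive definite matrices `F_0, …, F_n ∈ M` summing to the identity. -/
theorem stmt_2 {d : ℕ} (M : Submodule ℂ (Matrix (Fin d) (Fin d) ℂ))
    (hM : (fun X : Matrix (Fin d) (Fin d) ℂ => Xᴴ) '' (M : Set (Matrix (Fin d) (Fin d) ℂ)) = M)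
    (hI : (1 : Matrix (Fin d) (Fin d) ℂ) ∈ M) :
    ∃ (n : ℕ) (F : Fin (n + 1) → Matrix (Fin d) (Fin d) ℂ),
      (∀ k, F k ∈ M) ∧ (∀ k, (F k).PosDef) ∧ (∑ k, F k = 1) ∧
      Submodule.span ℂ (Set.range F) = M := by
  have hM_star : ∀ X ∈ M, star X ∈ M := fun X hX => by
    rw [← SetLike.mem_coe, ← hM]
    exact ⟨X, hX, rfl⟩
  obtain ⟨n, K, hK_herm, hK_sum, hK_span⟩ :=
    Submodule.exists_isSelfAdjoint_sum_eq_zero_span_eq hM_star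
  set c : ℝ := ((n : ℝ) + 1)⁻¹
  obtain ⟨δ, hδ, hF_posDef⟩ := exists_posDef_smul_one_add_smul (fun j => (hK_herm j).isHermitian)
    (c := c) (by positivity)
  have hK_mem : ∀ j, K j ∈ M := fun j => hK_span ▸ Submodule.subset_span ⟨j, rfl⟩
  have hcard : (Fintype.card (Fin (n + 1)) : ℂ) * c = 1 := by
    simp only [Fintype.card_fin, c]
    push_cast
    field_simp
  refine ⟨n, fun j => (c : ℂ) • 1 + (δ : ℂ) • K j,
    fun j => M.add_mem (M.smul_mem _ hI) (M.smul_mem _ (hK_mem j)), hF_posDef, ?_, ?_⟩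
  · rw [sum_smul_add_smul_of_sum_eq_zero _ hK_sum, hcard, one_smul]
  · rw [Submodule.span_range_smul_add_smul_eq _ hK_sum (hcard ▸ one_ne_zero)
      (by exact_mod_cast hδ.ne'), Submodule.span_insert_eq_span (hK_span ▸ hI), hK_span]
end

section
/- For every θ with 0 < θ < π/2, the matrix subspace S_1 = span{A'_1,…,A'_8} ⊆ M_4(ℂ) is unextendible: if ψ, φ ∈ ℂ⁴ satisfy tr(A'_k · ψφ†) = 0 for all k = 1,…,8, then ψ = 0 or φ = 0. Equivalently, no nonzero rank-one matrix is Hilbert–Schmidt orthogonal to all of A'_1,…,A'_8. -/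
open Matrix

/-- The eight basis matrices `A'_1, …, A'_8` of the subspace `S_1 ⊆ M_4(ℂ)`,
where `|a⟩⟨b| = stdBasisMatrix a b 1`. -/
noncomputable def Amat' (θ : ℝ) : Fin 8 → Matrix (Fin 4) (Fin 4) ℂ :=
  ![single 0 0 1 + single 1 1 1,
    single 2 2 1 + single 3 3 1,
    single 2 0 1 + single 0 2 1,
    single 3 0 1 + single 0 3 1,
    single 1 3 1 - single 3 1 1,
    (Real.cos θ : ℂ) • single 0 1 1 + (Real.sin θ : ℂ) • single 2 3 1 -
      single 1 2 1,
    (Real.cos θ : ℂ) • single 1 0 1 + (Real.sin θ : ℂ) • single 3 2 1 -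
      single 2 1 1,
    (Real.sin θ : ℂ) • single 0 1 1 - (Real.cos θ : ℂ) • single 2 3 1 +
      (Real.sin θ : ℂ) • single 1 0 1 - (Real.cos θ : ℂ) • single 3 2 1]

/-!
Write `x = ψ` and `y = φ̄`. Since `tr(|a⟩⟨b| · x yᵀ) = x_b y_a`, the eight trace conditions are
bilinear equations in `x, y`, invariant under swapping `x` and `y`, in which `s = sin θ` and
`c = cos θ` enter only as nonzero scalars. If `x₀ y₀ ≠ 0`, the equations from `A'_1, …, A'_5` force
`x₂² + x₃² = 0` and `x₃ (x₁² - x₀²) = 0`, and then `A'_6` or `A'_8` gives a contradiction.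
So, up to the symmetry, `x₀ = 0`; then `y₀ ≠ 0` or `y₁ ≠ 0` forces `x = 0`, and when
`x₀ = x₁ = y₀ = y₁ = 0` the remaining equations decouple into `x₃ y₂ = x₂ y₃ = x₂ y₂ + x₃ y₃ = 0`.
-/

section

variable {K : Type*} [Field K] {s c : K} {x y : Fin 4 → K}

/-- The equations `yᵀ A'_k x = 0`, `k = 1, …, 8`, with `cos θ, sin θ` replaced by `c, s`. -/
structure OrthogonalToS₁ (s c : K) (x y : Fin 4 → K) : Prop where
  a1 : x 0 * y 0 + x 1 * y 1 = 0
  a2 : x 2 * y 2 + x 3 * y 3 = 0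
  a3 : x 0 * y 2 + x 2 * y 0 = 0
  a4 : x 0 * y 3 + x 3 * y 0 = 0
  a5 : x 3 * y 1 - x 1 * y 3 = 0
  a6 : c * (x 1 * y 0) + s * (x 3 * y 2) - x 2 * y 1 = 0
  a7 : c * (x 0 * y 1) + s * (x 2 * y 3) - x 1 * y 2 = 0
  a8 : s * (x 1 * y 0) - c * (x 3 * y 2) + s * (x 0 * y 1) - c * (x 2 * y 3) = 0

lemma eq_zero_of_fin_four {v : Fin 4 → K} (h0 : v 0 = 0) (h1 : v 1 = 0) (h2 : v 2 = 0)
    (h3 : v 3 = 0) : v = 0 := by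
  ext i
  fin_cases i <;> assumption

namespace OrthogonalToS₁

lemma symm (h : OrthogonalToS₁ s c x y) : OrthogonalToS₁ s c y x where
  a1 := by linear_combination h.a1
  a2 := by linear_combination h.a2
  a3 := by linear_combination h.a3
  a4 := by linear_combination h.a4
  a5 := by linear_combination -h.a5
  a6 := by linear_combination h.a7
  a7 := by linear_combination h.a6
  a8 := by linear_combination h.a8

lemma head_eq_zero_or_head_eq_zero [NeZero (2 : K)] (hc : c ≠ 0) (h : OrthogonalToS₁ s c x y) :
    x 0 = 0 ∨ y 0 = 0 := by
  by_contra! hne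
  obtain ⟨hx0, hy0⟩ := hne
  have hx1 : x 1 ≠ 0 := by
    rintro hx1
    exact mul_ne_zero hx0 hy0 (by linear_combination h.a1 - y 1 * hx1)
  have hsq23 : x 2 ^ 2 + x 3 ^ 2 = 0 := by
    refine (mul_eq_zero.mp ?_).resolve_left hy0
    linear_combination -x 0 * h.a2 + x 2 * h.a3 + x 3 * h.a4
  have hx3 : x 3 ≠ 0 := by
    rintro hx3
    have hx2 : x 2 = 0 := pow_eq_zero_iff two_ne_zero |>.mp (by linear_combination hsq23 - x 3 * hx3)
    have : c * (x 1 * y 0) = 0 := by linear_combination h.a6 - s * y 2 * hx3 + y 1 * hx2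
    exact mul_ne_zero hc (mul_ne_zero hx1 hy0) this
  have hsq01 : x 1 ^ 2 - x 0 ^ 2 = 0 := by
    have : y 0 * (x 3 * (x 1 ^ 2 - x 0 ^ 2)) = 0 := by
      linear_combination x 1 ^ 2 * h.a4 + x 0 * x 1 * h.a5 - x 0 * x 3 * h.a1
    exact ((mul_eq_zero.mp this).resolve_left hy0 |> mul_eq_zero.mp).resolve_left hx3
  have hx2 : x 2 = 0 := by
    have : y 0 * (2 * c * x 1 * x 3 * x 2) = 0 := by
      linear_combination x 0 * x 1 * h.a8 + c * x 1 * x 3 * h.a3 + c * x 1 * x 2 * h.a4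
        - s * x 0 ^ 2 * h.a1 - s * x 0 * y 0 * hsq01
    simpa [hy0, hc, hx1, hx3, two_ne_zero] using this
  exact hx3 (pow_eq_zero_iff two_ne_zero |>.mp (by linear_combination hsq23 - x 2 * hx2))

lemma eq_zero_of_head_eq_zero_of_head_ne_zero (hc : c ≠ 0) (h : OrthogonalToS₁ s c x y)
    (hx0 : x 0 = 0) (hy0 : y 0 ≠ 0) : x = 0 := by
  have hx2 : x 2 = 0 := by simpa [hx0, hy0] using h.a3
  have hx3 : x 3 = 0 := by simpa [hx0, hy0] using h.a4
  have hx1 : x 1 = 0 := by simpa [hx2, hx3, hc, hy0] using h.a6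
  exact eq_zero_of_fin_four hx0 hx1 hx2 hx3

lemma eq_zero_of_head_eq_zero_of_ne_zero_one (h : OrthogonalToS₁ s c x y) (hx0 : x 0 = 0)
    (hy1 : y 1 ≠ 0) : x = 0 := by
  have hx1 : x 1 = 0 := by simpa [hx0, hy1] using h.a1
  have hx3 : x 3 = 0 := by simpa [hx1, hy1] using h.a5
  have hx2 : x 2 = 0 := by simpa [hx1, hx3, hy1] using h.a6
  exact eq_zero_of_fin_four hx0 hx1 hx2 hx3

lemma eq_zero_or_eq_zero_of_first_two_eq_zero (hs : s ≠ 0) (h : OrthogonalToS₁ s c x y)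
    (hx0 : x 0 = 0) (hx1 : x 1 = 0) (hy0 : y 0 = 0) (hy1 : y 1 = 0) : x = 0 ∨ y = 0 := by
  have hx3y2 : x 3 * y 2 = 0 := by simpa [hx1, hy1, hs] using h.a6
  have hx2y3 : x 2 * y 3 = 0 := by simpa [hx0, hx1, hs] using h.a7
  by_cases hy2 : y 2 = 0
  · by_cases hy3 : y 3 = 0
    · exact .inr (eq_zero_of_fin_four hy0 hy1 hy2 hy3)
    · have hx2 : x 2 = 0 := by simpa [hy3] using hx2y3
      have hx3 : x 3 = 0 := by simpa [hx2, hy2, hy3] using h.a2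
      exact .inl (eq_zero_of_fin_four hx0 hx1 hx2 hx3)
  · have hx3 : x 3 = 0 := by simpa [hy2] using hx3y2
    have hx2 : x 2 = 0 := by simpa [hx3, hy2] using h.a2
    exact .inl (eq_zero_of_fin_four hx0 hx1 hx2 hx3)

theorem eq_zero_or_eq_zero [NeZero (2 : K)] (hs : s ≠ 0) (hc : c ≠ 0)
    (h : OrthogonalToS₁ s c x y) : x = 0 ∨ y = 0 := by
  wlog hx0 : x 0 = 0 generalizing x y
  · exact (this h.symm ((h.head_eq_zero_or_head_eq_zero hc).resolve_left hx0)).symm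
  by_cases hy0 : y 0 = 0
  · by_cases hy1 : y 1 = 0
    · by_cases hx1 : x 1 = 0
      · exact h.eq_zero_or_eq_zero_of_first_two_eq_zero hs hx0 hx1 hy0 hy1
      · exact .inr (h.symm.eq_zero_of_head_eq_zero_of_ne_zero_one hy0 hx1)
    · exact .inl (h.eq_zero_of_head_eq_zero_of_ne_zero_one hx0 hy1)
  · exact .inl (h.eq_zero_of_head_eq_zero_of_head_ne_zero hc hx0 hy0)

end OrthogonalToS₁

end

lemma orthogonalToS₁_of_trace_eq_zero {θ : ℝ} {ψ φ : Fin 4 → ℂ}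
    (h : ∀ k, (Amat' θ k * vecMulVec ψ (star φ)).trace = 0) :
    OrthogonalToS₁ (Real.sin θ : ℂ) (Real.cos θ) ψ (star φ) := by
  simp only [Fin.forall_fin_succ, Amat', cons_val_zero, cons_val_succ, Matrix.add_mul,
    Matrix.sub_mul, Matrix.smul_mul, trace_add, trace_sub, trace_smul, trace_single_mul,
    vecMulVec_apply, one_mul, smul_eq_mul] at h
  obtain ⟨a1, a2, a3, a4, a5, a6, a7, a8, -⟩ := h
  exact ⟨a1, a2, a3, a4, a5, a6, a7, a8⟩

/-- for `0 < θ < π/2`, the subspace `S_1 = span {A'_1, …, A'_8}` is unextendible: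
no nonzero rank-one matrix `ψφ†` satisfies `tr(A'_k · ψφ†) = 0` for all `k`. -/
theorem stmt_5 (θ : ℝ) (hθ0 : 0 < θ) (hθ1 : θ < Real.pi / 2) (ψ φ : Fin 4 → ℂ)
    (h : ∀ k, (Amat' θ k * vecMulVec ψ (star φ)).trace = 0) :
    ψ = 0 ∨ φ = 0 := by
  have hs : (Real.sin θ : ℂ) ≠ 0 := by
    exact_mod_cast (Real.sin_pos_of_pos_of_lt_pi hθ0 (by linarith [Real.pi_pos])).ne'
  have hc : (Real.cos θ : ℂ) ≠ 0 := by
    exact_mod_cast (Real.cos_pos_of_mem_Ioo ⟨by linarith [Real.pi_pos], hθ1⟩).ne'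
  exact ((orthogonalToS₁_of_trace_eq_zero h).eq_zero_or_eq_zero hs hc).imp_right star_eq_zero.mp
end

section
/- Let E_1,…,E_n be d′×d complex matrices with ∑_{k=1}^n E_k† E_k = I_d, and suppose n² < 2d − 1. Then α(E) > 1: there exist unit vectors ψ, φ ∈ ℂ^d such that tr[E(|ψ⟩⟨ψ|)·E(|φ⟩⟨φ|)] = 0, where E(ρ) = ∑_k E_k ρ E_k†. -/
/-!
With `ψ = conj x` and `φ = y`, the output trace is `∑ j k, |⟨E_j ψ, E_k φ⟩|²`, which vanishes
as soon as `x ⬝ᵥ (E_jᴴ E_k) y = 0` for all `n²` pairs `(j, k)`. Since `n² ≤ 2d - 2`, it suffices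
that any `m ≤ (a - 1) + (b - 1)` bilinear forms on `Kᵃ × Kᵇ`, `K` algebraically closed, have a
common zero with `x ≠ 0` and `y ≠ 0`.

If they had none, the Nullstellensatz would put a power of every `x_i y_k` into the ideal of the
forms, so the ideal would contain the whole bidegree-`(n, n)` part `Vₙ` for large `n`. Let `h_j(n)`
be the codimension in `Vₙ` of the ideal of the first `j` forms. Multiplication by the next form
gives `h_j(n + 1) ≤ h_{j+1}(n + 1) + h_j(n)`, so from `h_m(n) = 0` for large `n` we get
`dim Vₙ = h_0(n) = O(n ^ (m - 1))`, contradicting the monomial count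
`dim Vₙ ≥ c · n ^ ((a - 1) + (b - 1))`.
-/

open Matrix

open MvPolynomial Module

def prefixIdeal {A : Type*} [CommSemiring A] (p : ℕ → A) (j : ℕ) : Ideal A :=
  Ideal.span (Set.range fun i : Fin j => p i)

theorem prefixIdeal_zero {A : Type*} [CommSemiring A] (p : ℕ → A) : prefixIdeal p 0 = ⊥ := by
  simp [prefixIdeal]

theorem prefixIdeal_mono {A : Type*} [CommSemiring A] (p : ℕ → A) (j : ℕ) :
    prefixIdeal p j ≤ prefixIdeal p (j + 1) :=
  Ideal.span_mono fun _ ⟨i, hi⟩ => ⟨i.castSucc, hi⟩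

section WeightedHomogeneous

variable {σ R M : Type*} [AddCancelCommMonoid M]

theorem MvPolynomial.weightedHomogeneousComponent_add_mul [CommSemiring R] [DecidableEq M]
    {w : σ → M} {δ : M} {p : MvPolynomial σ R} (hp : IsWeightedHomogeneous w p δ) (ε : M)
    (c : MvPolynomial σ R) :
    weightedHomogeneousComponent w (ε + δ) (c * p) = weightedHomogeneousComponent w ε c * p := by
  classical
  ext μ
  simp only [coeff_weightedHomogeneousComponent, coeff_mul]
  split_ifs with hμ
  · refine Finset.sum_congr rfl fun ⟨μ₁, μ₂⟩ hmem => ?_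
    by_cases hp₂ : coeff μ₂ p = 0
    · simp [hp₂]
    · have hsum : Finsupp.weight w μ₁ + δ = ε + δ := by
        rw [← hμ, ← Finset.HasAntidiagonal.mem_antidiagonal.1 hmem, map_add, hp hp₂]
      simp [add_right_cancel hsum]
  · refine (Finset.sum_eq_zero fun ⟨μ₁, μ₂⟩ hmem => ?_).symm
    by_cases hp₂ : coeff μ₂ p = 0
    · simp [hp₂]
    · have hμ₁ : Finsupp.weight w μ₁ ≠ ε := by
        rintro rfl
        exact hμ (by rw [← Finset.HasAntidiagonal.mem_antidiagonal.1 hmem, map_add, hp hp₂])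
      simp [hμ₁]

theorem exists_sub_mul_mem_prefixIdeal [CommRing R] [DecidableEq M] {w : σ → M} {δ ε : M}
    {p : ℕ → MvPolynomial σ R} (hp : ∀ i, IsWeightedHomogeneous w (p i) δ) {j : ℕ}
    {f : MvPolynomial σ R} (hf : IsWeightedHomogeneous w f (ε + δ))
    (hfj : f ∈ prefixIdeal p (j + 1)) :
    ∃ g, IsWeightedHomogeneous w g ε ∧ f - g * p j ∈ prefixIdeal p j := by
  obtain ⟨c, rfl⟩ := Ideal.mem_span_range_iff_exists_fun.1 hfj
  refine ⟨weightedHomogeneousComponent w ε (c (Fin.last j)),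
    weightedHomogeneousComponent_isWeightedHomogeneous _ _, ?_⟩
  rw [← hf.weightedHomogeneousComponent_same, map_sum, Fin.sum_univ_castSucc]
  simp only [weightedHomogeneousComponent_add_mul (hp _), Fin.val_last, add_sub_cancel_right]
  exact Ideal.mem_span_range_iff_exists_fun.2 ⟨_, rfl⟩

end WeightedHomogeneous

theorem exists_injective_tuple_sum_eq {α : Type*} [Fintype α] [Nonempty α] {q n : ℕ}
    (hn : q * (Fintype.card α - 1) ≤ n) :
    ∃ F : (Fin (Fintype.card α - 1) → Fin (q + 1)) → α → ℕ,
      Function.Injective F ∧ ∀ t, ∑ a, F t a = n := by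
  set k := Fintype.card α - 1
  let e : α ≃ Fin (k + 1) :=
    Fintype.equivFinOfCardEq (by have := Fintype.card_pos (α := α); omega)
  have hsum : ∀ t : Fin k → Fin (q + 1), ∑ i, (t i : ℕ) ≤ n := fun t =>
    (Finset.sum_le_sum fun i _ => Nat.lt_succ_iff.1 (t i).isLt).trans (by simpa [mul_comm] using hn)
  refine ⟨fun t => Fin.cons (n - ∑ i, (t i : ℕ)) (fun i => (t i : ℕ)) ∘ e,
    fun t t' htt' => ?_, fun t => ?_⟩
  · have htail := (Fin.cons_injective2 (e.surjective.injective_comp_right htt')).2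
    exact funext fun i => Fin.ext (congrFun htail i)
  · simp only [Function.comp_apply, e.sum_comp (Fin.cons _ _ : Fin (k + 1) → ℕ), Fin.sum_cons]
    have := hsum t
    omega

theorem finrank_le_finrank_quotient_add_of_le_range {R V W : Type*} [DivisionRing R]
    [AddCommGroup V] [Module R V] [AddCommGroup W] [Module R W] [FiniteDimensional R V]
    [FiniteDimensional R W] (f : V →ₗ[R] W) {S : Submodule R W} (hS : S ≤ LinearMap.range f) :
    finrank R W ≤ finrank R (W ⧸ S) + finrank R V := by
  rw [← S.finrank_quotient_add_finrank]
  gcongr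
  exact (Submodule.finrank_mono hS).trans f.finrank_range_le

theorem exists_mul_pow_lt_pow (C : ℕ) {m s : ℕ} (hms : m < s) :
    ∃ q, C * (q * s + 1) ^ m < (q + 1) ^ s := by
  refine ⟨C * s ^ m, ?_⟩
  set q := C * s ^ m
  calc C * (q * s + 1) ^ m ≤ C * ((q + 1) * s) ^ m := by gcongr; nlinarith
    _ = q * (q + 1) ^ m := by rw [mul_pow]; ring
    _ < (q + 1) ^ (m + 1) := by rw [pow_succ']; gcongr; omega
    _ ≤ (q + 1) ^ s := Nat.pow_le_pow_right (by omega) hms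

section Telescoping

variable {h : ℕ → ℕ → ℕ} (hrec : ∀ j n, h j (n + 1) ≤ h (j + 1) (n + 1) + h j n)
  (h₀ : ∀ j, h j 0 ≤ h (j + 1) 0)
include hrec h₀

theorem le_sum_range_of_le_add (j n : ℕ) : h j n ≤ ∑ k ∈ Finset.range (n + 1), h (j + 1) k := by
  induction n with
  | zero => simpa using h₀ j
  | succ n ih => rw [Finset.sum_range_succ]; linarith [hrec j n]

theorem exists_le_mul_pow_of_le_add {m N : ℕ} (hN : ∀ n, N ≤ n → h (m + 1) n = 0) :
    ∃ C, ∀ n, h 0 n ≤ C * (n + 1) ^ m := by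
  set C := ∑ k ∈ Finset.range N, h (m + 1) k
  suffices key : ∀ i j, i + j = m → ∀ n, h j n ≤ C * (n + 1) ^ i from ⟨C, key m 0 rfl⟩
  intro i
  induction i with
  | zero =>
    intro j hj n
    obtain rfl : j = m := by omega
    calc h j n ≤ ∑ k ∈ Finset.range (n + 1), h (j + 1) k := le_sum_range_of_le_add hrec h₀ j n
      _ ≤ C := Finset.sum_le_sum_of_ne_zero fun k _ hk =>
          Finset.mem_range.2 (not_le.1 fun hNk => hk (hN k (by simpa using hNk)))
      _ = C * (n + 1) ^ 0 := by simp
  | succ i ih =>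
    intro j hij n
    calc h j n ≤ ∑ k ∈ Finset.range (n + 1), h (j + 1) k := le_sum_range_of_le_add hrec h₀ j n
      _ ≤ ∑ _k ∈ Finset.range (n + 1), C * (n + 1) ^ i := by
          refine Finset.sum_le_sum fun k hk => (ih (j + 1) (by omega) k).trans ?_
          gcongr
          exact Finset.mem_range_succ_iff.1 hk
      _ = C * (n + 1) ^ (i + 1) := by simp [pow_succ]; ring

end Telescoping

noncomputable section Bihomogeneous

variable (K : Type*) [Field K] (ι κ : Type*)

def bidegreeWeight : ι ⊕ κ → ℕ × ℕ := Sum.elim (fun _ => (1, 0)) (fun _ => (0, 1))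

abbrev bihomogeneousSubmodule (n : ℕ) : Submodule K (MvPolynomial (ι ⊕ κ) K) :=
  weightedHomogeneousSubmodule K (bidegreeWeight ι κ) (n, n)

variable {K ι κ} (p : ℕ → MvPolynomial (ι ⊕ κ) K)

def prefixIdealPiece (j n : ℕ) : Submodule K (bihomogeneousSubmodule K ι κ n) :=
  ((prefixIdeal p j).restrictScalars K).comap (bihomogeneousSubmodule K ι κ n).subtype

def hilbertDiag (j n : ℕ) : ℕ :=
  finrank K (bihomogeneousSubmodule K ι κ n ⧸ prefixIdealPiece p j n)

variable {p}

theorem hilbertDiag_zero_left (n : ℕ) :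
    hilbertDiag p 0 n = finrank K (bihomogeneousSubmodule K ι κ n) := by
  refine (Submodule.quotEquivOfEqBot _ ?_).finrank_eq
  ext f
  simp [prefixIdealPiece, prefixIdeal_zero]

theorem hilbertDiag_zero_right (hp : ∀ i, p i ∈ bihomogeneousSubmodule K ι κ 1) (j : ℕ) :
    hilbertDiag p j 0 = finrank K (bihomogeneousSubmodule K ι κ 0) := by
  suffices h : prefixIdealPiece p j 0 = ⊥ from (Submodule.quotEquivOfEqBot _ h).finrank_eq
  refine (Submodule.eq_bot_iff _).2 fun ⟨f, hf⟩ hfj => ?_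
  have hker : prefixIdeal p j ≤ RingHom.ker (constantCoeff : MvPolynomial (ι ⊕ κ) K →+* K) :=
    Ideal.span_le.2 fun _ ⟨i, hi⟩ => hi ▸ (hp i).coeff_eq_zero 0 (by simp [Prod.ext_iff])
  have hconst : f = C (coeff 0 f) := by
    rw [← weightedHomogeneousComponent_zero f (w := bidegreeWeight ι κ)
      (fun i => by cases i <;> simp [bidegreeWeight])]
    exact hf.weightedHomogeneousComponent_same.symm
  have hcoeff : coeff 0 f = 0 := hker hfj
  exact Subtype.ext (hconst.trans (by rw [hcoeff, map_zero]; rfl))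

variable [Fintype ι] [Fintype κ]

theorem weight_bidegreeWeight (μ : ι ⊕ κ →₀ ℕ) :
    Finsupp.weight (bidegreeWeight ι κ) μ = (∑ i, μ (.inl i), ∑ k, μ (.inr k)) := by
  simp [Finsupp.weight_apply, Finsupp.sum_fintype, Fintype.sum_sum_type, bidegreeWeight,
    Prod.ext_iff, Prod.fst_sum, Prod.snd_sum]

instance (n : ℕ) : FiniteDimensional K (bihomogeneousSubmodule K ι κ n) := by
  have hfin : {μ : ι ⊕ κ →₀ ℕ | Finsupp.weight (bidegreeWeight ι κ) μ = (n, n)}.Finite := by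
    refine (Finsupp.finite_of_degree_le (2 * n)).subset fun μ hμ => ?_
    simp only [Set.mem_ofPred_eq, weight_bidegreeWeight, Prod.mk.injEq] at hμ ⊢
    rw [Finsupp.degree_eq_sum, Fintype.sum_sum_type, hμ.1, hμ.2, two_mul]
  have := hfin.to_subtype
  rw [bihomogeneousSubmodule, weightedHomogeneousSubmodule_eq_finsupp_supported]
  exact Module.Finite.of_basis (basisRestrictSupport K _)

theorem hilbertDiag_succ_le (hp : ∀ i, p i ∈ bihomogeneousSubmodule K ι κ 1) (j n : ℕ) :
    hilbertDiag p j (n + 1) ≤ hilbertDiag p (j + 1) (n + 1) + hilbertDiag p j n := by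
  set A := prefixIdealPiece p j (n + 1)
  set B := prefixIdealPiece p (j + 1) (n + 1)
  have hAB : A ≤ B := Submodule.comap_mono (prefixIdeal_mono p j)
  let mul : bihomogeneousSubmodule K ι κ n →ₗ[K] bihomogeneousSubmodule K ι κ (n + 1) :=
    (LinearMap.mulRight K (p j)).restrict fun g hg => hg.mul (hp j)
  let φ := (prefixIdealPiece p j n).mapQ A mul fun _ hg =>
    Ideal.mul_mem_right (p j) (prefixIdeal p j) hg
  have hrange : B.map A.mkQ ≤ LinearMap.range φ := by
    rintro _ ⟨⟨f, hf⟩, hfB, rfl⟩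
    obtain ⟨g, hg, hfg⟩ := exists_sub_mul_mem_prefixIdeal (ε := (n, n)) hp hf hfB
    refine ⟨Submodule.Quotient.mk ⟨g, hg⟩, (Submodule.Quotient.eq _).2 ?_⟩
    change g * p j - f ∈ prefixIdeal p j
    simpa using neg_mem hfg
  calc hilbertDiag p j (n + 1) ≤ finrank K (_ ⧸ B.map A.mkQ) + hilbertDiag p j n :=
        finrank_le_finrank_quotient_add_of_le_range φ hrange
    _ = hilbertDiag p (j + 1) (n + 1) + hilbertDiag p j n := by
        rw [(Submodule.quotientQuotientEquivQuotient A B hAB).finrank_eq]; rfl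

theorem exists_pow_X_mul_X_mem_prefixIdeal [IsAlgClosed K] {m : ℕ}
    (hnone : ¬∃ (x : ι → K) (y : κ → K), x ≠ 0 ∧ y ≠ 0 ∧ ∀ i < m, eval (Sum.elim x y) (p i) = 0) :
    ∃ M, ∀ a b, (X (.inl a) * X (.inr b) : MvPolynomial (ι ⊕ κ) K) ^ M ∈ prefixIdeal p m := by
  set I := prefixIdeal p m
  have hrad : ∀ a b, (X (.inl a) * X (.inr b) : MvPolynomial (ι ⊕ κ) K) ∈ I.radical := by
    intro a b
    rw [← vanishingIdeal_zeroLocus_eq_radical (K := K), mem_vanishingIdeal_iff]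
    intro z hz
    have hcomm : ∀ i < m, eval (Sum.elim (z ∘ .inl) (z ∘ .inr)) (p i) = 0 := fun i hi => by
      simpa using hz (p i) (Ideal.subset_span ⟨⟨i, hi⟩, rfl⟩)
    by_cases hx : z ∘ .inl = 0
    · simp [show z (.inl a) = 0 from congrFun hx a]
    by_cases hy : z ∘ .inr = 0
    · simp [show z (.inr b) = 0 from congrFun hy b]
    exact absurd ⟨_, _, hx, hy, hcomm⟩ hnone
  obtain ⟨M, hM⟩ := Ideal.exists_pow_le_of_le_radical_of_fg
    (Ideal.span_le.2 (Set.range_subset_iff.2 fun ab : ι × κ => hrad ab.1 ab.2) :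
      Ideal.span (Set.range fun ab : ι × κ => X (.inl ab.1) * X (.inr ab.2)) ≤ I.radical)
    (Submodule.fg_span (Set.finite_range _))
  exact ⟨M, fun a b => hM (Ideal.pow_mem_pow (Ideal.subset_span (Set.mem_range_self (a, b))) M)⟩

theorem bihomogeneousSubmodule_le_of_pow_X_mul_X_mem [Nonempty ι] [Nonempty κ]
    {I : Ideal (MvPolynomial (ι ⊕ κ) K)} {M : ℕ} (hM : ∀ a b, (X (.inl a) * X (.inr b)) ^ M ∈ I)
    {n : ℕ} (hn : (Fintype.card ι + Fintype.card κ) * M ≤ n) :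
    bihomogeneousSubmodule K ι κ n ≤ I.restrictScalars K := by
  set S := Set.range fun ab : ι × κ =>
    Finsupp.single (Sum.inl ab.1 : ι ⊕ κ) M + Finsupp.single (.inr ab.2) M
  have hSI : Ideal.span ((fun s => monomial s (1 : K)) '' S) ≤ I := by
    rw [Ideal.span_le, ← Set.range_comp, Set.range_subset_iff]
    rintro ⟨a, b⟩
    convert hM a b using 1
    simp [mul_pow, X_pow_eq_monomial, monomial_mul]
  refine fun f hf => hSI (mem_ideal_span_monomial_image.2 fun μ hμ => ?_)
  have hw := hf (mem_support_iff.1 hμ)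
  rw [weight_bidegreeWeight, Prod.mk.injEq] at hw
  obtain ⟨a, -, ha⟩ := Finset.exists_le_of_sum_le Finset.univ_nonempty
    (f := fun _ => M) (g := fun a => μ (.inl a)) (by simp [hw.1]; nlinarith)
  obtain ⟨b, -, hb⟩ := Finset.exists_le_of_sum_le Finset.univ_nonempty
    (f := fun _ => M) (g := fun b => μ (.inr b)) (by simp [hw.2]; nlinarith)
  refine ⟨_, ⟨(a, b), rfl⟩, fun t => ?_⟩
  rcases t with t | t
  · by_cases hat : t = a <;> simp_all
  · by_cases hbt : t = b <;> simp_all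

theorem exists_hilbertDiag_eq_zero [IsAlgClosed K] [Nonempty ι] [Nonempty κ] {m : ℕ}
    (hnone : ¬∃ (x : ι → K) (y : κ → K), x ≠ 0 ∧ y ≠ 0 ∧ ∀ i < m, eval (Sum.elim x y) (p i) = 0) :
    ∃ N, ∀ n, N ≤ n → hilbertDiag p m n = 0 := by
  obtain ⟨M, hM⟩ := exists_pow_X_mul_X_mem_prefixIdeal hnone
  refine ⟨(Fintype.card ι + Fintype.card κ) * M, fun n hn => ?_⟩
  have htop : prefixIdealPiece p m n = ⊤ :=
    eq_top_iff.2 fun f _ => bihomogeneousSubmodule_le_of_pow_X_mul_X_mem hM hn f.2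
  have := Submodule.Quotient.subsingleton_iff.2 htop
  exact finrank_zero_of_subsingleton

theorem pow_le_finrank_bihomogeneousSubmodule [Nonempty ι] [Nonempty κ] {q n : ℕ}
    (hι : q * (Fintype.card ι - 1) ≤ n) (hκ : q * (Fintype.card κ - 1) ≤ n) :
    (q + 1) ^ (Fintype.card ι - 1 + (Fintype.card κ - 1)) ≤
      finrank K (bihomogeneousSubmodule K ι κ n) := by
  obtain ⟨F, hFinj, hF⟩ := exists_injective_tuple_sum_eq hι
  obtain ⟨G, hGinj, hG⟩ := exists_injective_tuple_sum_eq hκ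
  let μ (tu : (Fin (Fintype.card ι - 1) → Fin (q + 1)) × (Fin (Fintype.card κ - 1) → Fin (q + 1))) :
      ι ⊕ κ →₀ ℕ :=
    Finsupp.equivFunOnFinite.symm (Sum.elim (F tu.1) (G tu.2))
  have hμ : Function.Injective μ := by
    rintro ⟨t, u⟩ ⟨t', u'⟩ h
    have h' := Finsupp.equivFunOnFinite.symm.injective h
    rw [hFinj (by simpa using congrArg (· ∘ Sum.inl) h' : F t = F t'),
      hGinj (by simpa using congrArg (· ∘ Sum.inr) h' : G u = G u')]
  have hmem : ∀ tu, monomial (μ tu) (1 : K) ∈ bihomogeneousSubmodule K ι κ n := fun tu =>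
    isWeightedHomogeneous_monomial _ _ _ (by simp [weight_bidegreeWeight, μ, hF, hG])
  have hli : LinearIndependent K fun tu => (⟨_, hmem tu⟩ : bihomogeneousSubmodule K ι κ n) :=
    LinearIndependent.of_comp (bihomogeneousSubmodule K ι κ n).subtype <| by
      simpa [Function.comp_def, coe_basisMonomials] using
        (basisMonomials (ι ⊕ κ) K).linearIndependent.comp μ hμ
  simpa [Fintype.card_prod, Fintype.card_fun, pow_add] using hli.fintype_card_le_finrank

theorem exists_common_zero_of_bihomogeneous [IsAlgClosed K] [Nonempty ι] [Nonempty κ]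
    (hp : ∀ i, p i ∈ bihomogeneousSubmodule K ι κ 1) {m : ℕ}
    (hm : m + 2 ≤ Fintype.card ι + Fintype.card κ) :
    ∃ (x : ι → K) (y : κ → K), x ≠ 0 ∧ y ≠ 0 ∧ ∀ i < m, eval (Sum.elim x y) (p i) = 0 := by
  by_contra hnone
  rcases m with _ | m
  · exact hnone ⟨fun _ => 1, fun _ => 1, Function.ne_iff.2 ⟨Classical.arbitrary ι, one_ne_zero⟩,
      Function.ne_iff.2 ⟨Classical.arbitrary κ, one_ne_zero⟩, by simp⟩
  obtain ⟨N, hN⟩ := exists_hilbertDiag_eq_zero hnone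
  obtain ⟨C, hC⟩ := exists_le_mul_pow_of_le_add (hilbertDiag_succ_le hp)
    (fun j => ((hilbertDiag_zero_right hp j).trans (hilbertDiag_zero_right hp (j + 1)).symm).le) hN
  set s := Fintype.card ι - 1 + (Fintype.card κ - 1)
  obtain ⟨q, hq⟩ := exists_mul_pow_lt_pow C (show m < s by omega)
  have hlower := pow_le_finrank_bihomogeneousSubmodule (K := K) (ι := ι) (κ := κ) (n := q * s)
    (q := q) (Nat.mul_le_mul_left q (by omega)) (Nat.mul_le_mul_left q (by omega))
  rw [← hilbertDiag_zero_left (p := p)] at hlower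
  exact (hlower.trans (hC _)).not_gt hq

end Bihomogeneous

section Bilinear

variable {K ι κ : Type*} [Field K] [Fintype ι] [Fintype κ]

noncomputable def Matrix.bilinearPoly (B : Matrix ι κ K) : MvPolynomial (ι ⊕ κ) K :=
  ∑ a, ∑ b, C (B a b) * X (.inl a) * X (.inr b)

theorem Matrix.eval_bilinearPoly (B : Matrix ι κ K) (x : ι → K) (y : κ → K) :
    eval (Sum.elim x y) B.bilinearPoly = x ⬝ᵥ B *ᵥ y := by
  simp [Matrix.bilinearPoly, dotProduct, Matrix.mulVec, Finset.mul_sum, mul_comm, mul_left_comm]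

theorem Matrix.bilinearPoly_mem (B : Matrix ι κ K) :
    B.bilinearPoly ∈ bihomogeneousSubmodule K ι κ 1 := by
  refine IsWeightedHomogeneous.sum _ _ _ fun a _ => IsWeightedHomogeneous.sum _ _ _ fun b _ => ?_
  have hX := ((isWeightedHomogeneous_X K (bidegreeWeight ι κ) (.inl a)).C_mul (B a b)).mul
      (isWeightedHomogeneous_X K _ (.inr b))
  simpa [bidegreeWeight] using hX

theorem Matrix.exists_ne_zero_dotProduct_mulVec_eq_zero [IsAlgClosed K] [Nonempty ι] [Nonempty κ]
    {τ : Type*} [Fintype τ] (B : τ → Matrix ι κ K)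
    (hτ : Fintype.card τ + 2 ≤ Fintype.card ι + Fintype.card κ) :
    ∃ x y, x ≠ 0 ∧ y ≠ 0 ∧ ∀ t, x ⬝ᵥ B t *ᵥ y = 0 := by
  let e := Fintype.equivFin τ
  let p (i : ℕ) : MvPolynomial (ι ⊕ κ) K :=
    if h : i < Fintype.card τ then (B (e.symm ⟨i, h⟩)).bilinearPoly else 0
  have hp : ∀ i, p i ∈ bihomogeneousSubmodule K ι κ 1 := fun i => by
    unfold p; split_ifs
    exacts [bilinearPoly_mem _, zero_mem _]
  obtain ⟨x, y, hx, hy, hxy⟩ := exists_common_zero_of_bihomogeneous hp hτ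
  refine ⟨x, y, hx, hy, fun t => ?_⟩
  simpa [p, eval_bilinearPoly] using hxy (e t) (e t).isLt

end Bilinear

open scoped ComplexOrder in
theorem exists_star_smul_dotProduct_smul_eq_one {ι : Type*} [Fintype ι] {v : ι → ℂ} (hv : v ≠ 0) :
    ∃ c : ℂ, star (c • v) ⬝ᵥ (c • v) = 1 := by
  obtain ⟨hre, him⟩ := Complex.pos_iff.1 (dotProduct_star_self_pos_iff.2 hv)
  set r := star v ⬝ᵥ v
  have hr : r = (r.re : ℂ) := Complex.ext rfl (by simp [him])
  refine ⟨((r.re.sqrt)⁻¹ : ℝ), ?_⟩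
  rw [star_smul, smul_dotProduct, dotProduct_smul, show star v ⬝ᵥ v = r.re from hr,
    Complex.star_def, Complex.conj_ofReal, smul_eq_mul, smul_eq_mul]
  norm_cast
  rw [← mul_assoc, ← mul_inv, Real.mul_self_sqrt hre.le, inv_mul_cancel₀ hre.ne']

theorem trace_channelApply_mul_eq_zero {n d d' : ℕ} (E : Fin n → Matrix (Fin d') (Fin d) ℂ)
    {ψ φ : Fin d → ℂ} (h : ∀ j k, star ψ ⬝ᵥ ((E j)ᴴ * E k) *ᵥ φ = 0) :
    (channelApply E (vecMulVec ψ (star ψ)) * channelApply E (vecMulVec φ (star φ))).trace = 0 := by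
  have hconj : ∀ (A : Matrix (Fin d') (Fin d) ℂ) v,
      A * vecMulVec v (star v) * Aᴴ = vecMulVec (A *ᵥ v) (star v ᵥ* Aᴴ) := fun A v => by
    rw [mul_vecMulVec, vecMulVec_mul]
  have hterm : ∀ j k, (E j * vecMulVec ψ (star ψ) * (E j)ᴴ *
      (E k * vecMulVec φ (star φ) * (E k)ᴴ)).trace = 0 := fun j k => by
    rw [hconj, hconj, vecMulVec_mul_vecMulVec,
      ← dotProduct_mulVec, mulVec_mulVec, h, zero_smul, vecMulVec_zero, trace_zero]
  simp [channelApply, Finset.sum_mul, Finset.mul_sum, trace_sum, hterm]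

theorem stmt_10_general {n d d' : ℕ} (E : Fin n → Matrix (Fin d') (Fin d) ℂ)
    (hn : (n : ℤ) ^ 2 < 2 * (d : ℤ) - 1) :
    ∃ ψ φ : Fin d → ℂ, star ψ ⬝ᵥ ψ = 1 ∧ star φ ⬝ᵥ φ = 1 ∧
      (channelApply E (vecMulVec ψ (star ψ)) *
        channelApply E (vecMulVec φ (star φ))).trace = 0 := by
  have hcard : n * n + 2 ≤ d + d := by zify; nlinarith
  have : Nonempty (Fin d) := ⟨⟨0, by omega⟩⟩
  obtain ⟨x, y, hx, hy, hxy⟩ := exists_ne_zero_dotProduct_mulVec_eq_zero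
    (fun jk : Fin n × Fin n => (E jk.1)ᴴ * E jk.2) (by simpa using hcard)
  obtain ⟨a, ha⟩ := exists_star_smul_dotProduct_smul_eq_one (star_ne_zero.2 hx)
  obtain ⟨b, hb⟩ := exists_star_smul_dotProduct_smul_eq_one hy
  refine ⟨a • star x, b • y, ha, hb, trace_channelApply_mul_eq_zero E fun j k => ?_⟩
  simp [star_smul, smul_dotProduct, dotProduct_smul, mulVec_smul, hxy (j, k)]

/-- a quantum channel with `n` Kraus operators on `ℂ^d` and `n² < 2d − 1`
always has `α(E) > 1`: some two unit input vectors have orthogonal outputs. -/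
theorem stmt_10 {n d d' : ℕ} (E : Fin n → Matrix (Fin d') (Fin d) ℂ)
    (hE : ∑ k, (E k)ᴴ * E k = 1) (hn : (n : ℤ) ^ 2 < 2 * (d : ℤ) - 1) :
    ∃ ψ φ : Fin d → ℂ, star ψ ⬝ᵥ ψ = 1 ∧ star φ ⬝ᵥ φ = 1 ∧
      (channelApply E (vecMulVec ψ (star ψ)) *
        channelApply E (vecMulVec φ (star φ))).trace = 0 :=
  stmt_10_general E hn
end

section
/- Let P_1 = |0⟩⟨1|, P_2 = |1⟩⟨0|, P_3 = |+⟩⟨−| in M_2(ℂ), and for d ≥ 1 let T = span{P_i ⊗ C : i ∈ {1,2,3}, C ∈ M_d(ℂ)} ⊆ M_{2d}(ℂ) (Kronecker products). Then the orthogonal complement of T with respect to the Hilbert–Schmidt inner product equals {I_2 ⊗ D : D ∈ M_d(ℂ)}, and this complement contains no nonzero rank-one matrix (every nonzero matrix of the form I_2 ⊗ D has rank at least 2). Hence T is an unextendible subspace spanned by rank-one matrices, and its orthogonal complement is completely entangled. -/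
/-!
Pairing `M` with `P ⊗ E_{ji}` reads off `∑ a b, conj (P a b) * M (a, j) (b, i)`, a pairing of `P`
with the `2 × 2` matrix of `(j, i)`-entries of the four blocks of `M`. Orthogonality to `P₁` and
`P₂` kills the off-diagonal blocks, and since `P₃ = ½ (1, 1)ᵀ (1, -1)`, orthogonality to `P₃`
then forces the two diagonal blocks to agree. Conversely `I₂ ⊗ D` is orthogonal to `P ⊗ C`
whenever `tr P = 0`. A nonzero entry `D j i` gives the submatrix `D j i • I₂` of `I₂ ⊗ D`,
so its rank is at least 2 and it cannot be a rank-one matrix.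
-/

open Matrix Kronecker

/-- `|+⟩ = (|0⟩ + |1⟩)/√2`. -/
noncomputable def ketP : Fin 2 → ℂ := ![(Real.sqrt 2 : ℂ)⁻¹, (Real.sqrt 2 : ℂ)⁻¹]

/-- `|−⟩ = (|0⟩ − |1⟩)/√2`. -/
noncomputable def ketM : Fin 2 → ℂ := ![(Real.sqrt 2 : ℂ)⁻¹, -(Real.sqrt 2 : ℂ)⁻¹]

/-- `P_1 = |0⟩⟨1|`, `P_2 = |1⟩⟨0|`, `P_3 = |+⟩⟨−|` in `M_2(ℂ)`. -/
noncomputable def Pmat : Fin 3 → Matrix (Fin 2) (Fin 2) ℂ :=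
  ![single 0 1 1, single 1 0 1, vecMulVec ketP (star ketM)]

/-- The subspace `T = span {P_i ⊗ C : i ∈ {1,2,3}, C ∈ M_d(ℂ)} ⊆ M_{2d}(ℂ)`. -/
noncomputable def Tsub (d : ℕ) : Submodule ℂ (Matrix (Fin 2 × Fin d) (Fin 2 × Fin d) ℂ) :=
  Submodule.span ℂ {X : Matrix (Fin 2 × Fin d) (Fin 2 × Fin d) ℂ |
    ∃ (i : Fin 3) (C : Matrix (Fin d) (Fin d) ℂ), X = Pmat i ⊗ₖ C}

section

variable {R : Type*} [CommRing R] [StarRing R] {m n : Type*} [Fintype m] [Fintype n]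

theorem forall_mem_span_trace_conjTranspose_mul_eq_zero {S : Set (Matrix n n R)}
    {M : Matrix n n R} (hS : ∀ X ∈ S, (Xᴴ * M).trace = 0) :
    ∀ X ∈ Submodule.span R S, (Xᴴ * M).trace = 0 := by
  intro X hX
  induction hX using Submodule.span_induction with
  | mem X hX => exact hS X hX
  | zero => simp
  | add X Y _ _ hX hY => rw [conjTranspose_add, add_mul, trace_add, hX, hY, add_zero]
  | smul c X _ hX => rw [conjTranspose_smul, smul_mul, trace_smul, hX, smul_zero]

theorem trace_conjTranspose_kronecker_mul_one_kronecker [DecidableEq m]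
    (P : Matrix m m R) (C D : Matrix n n R) :
    ((P ⊗ₖ C)ᴴ * ((1 : Matrix m m R) ⊗ₖ D)).trace = star P.trace * (Cᴴ * D).trace := by
  rw [conjTranspose_kronecker, ← mul_kronecker_mul, trace_kronecker, mul_one,
    trace_conjTranspose]

theorem trace_conjTranspose_kronecker_single_mul [DecidableEq n] (P : Matrix m m R)
    (M : Matrix (m × n) (m × n) R) (j i : n) :
    ((P ⊗ₖ single j i 1)ᴴ * M).trace = ∑ a, ∑ b, star (P a b) * M (a, j) (b, i) := by
  simp only [trace, diag_apply, mul_apply, conjTranspose_apply, kroneckerMap_apply,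
    Fintype.sum_prod_type, single_apply, mul_ite, mul_one, mul_zero, ite_and]
  simp [apply_ite star, ite_mul, Finset.sum_ite_eq]
  rw [Finset.sum_comm]

end

theorem card_le_rank_one_kronecker {K : Type*} [Field K] {m n p : Type*} [Fintype m]
    [DecidableEq m] [Fintype n] [Fintype p]
    {D : Matrix n p K} (hD : D ≠ 0) : Fintype.card m ≤ ((1 : Matrix m m K) ⊗ₖ D).rank := by
  obtain ⟨j, i, hji⟩ : ∃ j i, D j i ≠ 0 := by
    by_contra! h
    exact hD (Matrix.ext h)
  have hsub : ((1 : Matrix m m K) ⊗ₖ D).submatrix (·, j) (·, i) = D j i • 1 := by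
    ext a b
    simp [one_apply]
  calc Fintype.card m = (D j i • (1 : Matrix m m K)).rank := by
        rw [rank_smul_of_mem_nonZeroDivisors _ (mem_nonZeroDivisors_of_ne_zero hji), rank_one]
    _ ≤ _ := hsub ▸ rank_submatrix_le _ _ _

theorem sqrt_two_inv_mul_self : ((Real.sqrt 2 : ℂ))⁻¹ * (Real.sqrt 2 : ℂ)⁻¹ = 2⁻¹ := by
  rw [← mul_inv, ← Complex.ofReal_mul, Real.mul_self_sqrt zero_le_two]
  norm_num

theorem Pmat_two : Pmat 2 = (2 : ℂ)⁻¹ • vecMulVec ![1, 1] ![1, -1] := by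
  change vecMulVec ketP (star ketM) = _
  ext a b
  fin_cases a <;> fin_cases b <;> simp [ketP, ketM, vecMulVec_apply, sqrt_two_inv_mul_self]

theorem trace_Pmat (k : Fin 3) : (Pmat k).trace = 0 := by
  fin_cases k
  · simp [Pmat, trace]
  · simp [Pmat, trace]
  · simp [Pmat_two, trace]

theorem trace_conjTranspose_mul_one_kronecker_of_mem_Tsub {d : ℕ} (D : Matrix (Fin d) (Fin d) ℂ)
    {X : Matrix (Fin 2 × Fin d) (Fin 2 × Fin d) ℂ} (hX : X ∈ Tsub d) :
    (Xᴴ * ((1 : Matrix (Fin 2) (Fin 2) ℂ) ⊗ₖ D)).trace = 0 := by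
  refine forall_mem_span_trace_conjTranspose_mul_eq_zero ?_ X hX
  rintro _ ⟨k, C, rfl⟩
  rw [trace_conjTranspose_kronecker_mul_one_kronecker, trace_Pmat, star_zero, zero_mul]

theorem exists_eq_one_kronecker_of_orthogonal_Tsub {d : ℕ}
    {M : Matrix (Fin 2 × Fin d) (Fin 2 × Fin d) ℂ} (h : ∀ X ∈ Tsub d, (Xᴴ * M).trace = 0) :
    ∃ D : Matrix (Fin d) (Fin d) ℂ, M = (1 : Matrix (Fin 2) (Fin 2) ℂ) ⊗ₖ D := by
  have hblock (k : Fin 3) (j i : Fin d) :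
      ∑ a, ∑ b, star (Pmat k a b) * M (a, j) (b, i) = 0 := by
    rw [← trace_conjTranspose_kronecker_single_mul]
    exact h _ (Submodule.subset_span ⟨k, _, rfl⟩)
  have h01 (j i : Fin d) : M (0, j) (1, i) = 0 := by
    simpa [Pmat, Fin.sum_univ_two] using hblock 0 j i
  have h10 (j i : Fin d) : M (1, j) (0, i) = 0 := by
    simpa [Pmat, Fin.sum_univ_two] using hblock 1 j i
  have hdiag (j i : Fin d) : M (0, j) (0, i) = M (1, j) (1, i) := by
    have h2 := hblock 2 j i
    rw [Pmat_two] at h2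
    simp [Fin.sum_univ_two, h01, h10] at h2
    linear_combination 2 * h2
  refine ⟨of fun j i => M (0, j) (0, i), ?_⟩
  ext ⟨a, j⟩ ⟨b, i⟩
  fin_cases a <;> fin_cases b <;> simp [one_apply, h01, h10, hdiag]

theorem stmt_17_general (d : ℕ) :
    ({M : Matrix (Fin 2 × Fin d) (Fin 2 × Fin d) ℂ |
        ∀ X ∈ Tsub d, (Xᴴ * M).trace = 0} =
      {M : Matrix (Fin 2 × Fin d) (Fin 2 × Fin d) ℂ |
        ∃ D : Matrix (Fin d) (Fin d) ℂ, M = (1 : Matrix (Fin 2) (Fin 2) ℂ) ⊗ₖ D}) ∧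
    (∀ D : Matrix (Fin d) (Fin d) ℂ, D ≠ 0 →
      2 ≤ ((1 : Matrix (Fin 2) (Fin 2) ℂ) ⊗ₖ D).rank) ∧
    (∀ ψ φ : Fin 2 × Fin d → ℂ,
      (∀ X ∈ Tsub d, (Xᴴ * vecMulVec ψ (star φ)).trace = 0) → ψ = 0 ∨ φ = 0) := by
  have hrank (D : Matrix (Fin d) (Fin d) ℂ) (hD : D ≠ 0) :
      2 ≤ ((1 : Matrix (Fin 2) (Fin 2) ℂ) ⊗ₖ D).rank := by
    simpa using card_le_rank_one_kronecker (m := Fin 2) hD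
  refine ⟨Set.ext fun M => ⟨exists_eq_one_kronecker_of_orthogonal_Tsub, ?_⟩, hrank, ?_⟩
  · rintro ⟨D, rfl⟩ X hX
    exact trace_conjTranspose_mul_one_kronecker_of_mem_Tsub D hX
  · intro ψ φ h
    obtain ⟨D, hD⟩ := exists_eq_one_kronecker_of_orthogonal_Tsub h
    obtain rfl : D = 0 := by
      by_contra hD0
      have := (hrank D hD0).trans ((congrArg rank hD).ge.trans (rank_vecMulVec_le _ _))
      omega
    simpa using hD

/-- the Hilbert–Schmidt orthogonal complement of `T` is `{I₂ ⊗ D}`;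
every nonzero `I₂ ⊗ D` has rank at least 2 (so the complement is completely entangled);
hence `T` is unextendible: no nonzero rank-one matrix is orthogonal to `T`. -/
theorem stmt_17 (d : ℕ) (hd : 1 ≤ d) :
    ({M : Matrix (Fin 2 × Fin d) (Fin 2 × Fin d) ℂ |
        ∀ X ∈ Tsub d, (Xᴴ * M).trace = 0} =
      {M : Matrix (Fin 2 × Fin d) (Fin 2 × Fin d) ℂ |
        ∃ D : Matrix (Fin d) (Fin d) ℂ, M = (1 : Matrix (Fin 2) (Fin 2) ℂ) ⊗ₖ D}) ∧
    (∀ D : Matrix (Fin d) (Fin d) ℂ, D ≠ 0 →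
      2 ≤ ((1 : Matrix (Fin 2) (Fin 2) ℂ) ⊗ₖ D).rank) ∧
    (∀ ψ φ : Fin 2 × Fin d → ℂ,
      (∀ X ∈ Tsub d, (Xᴴ * vecMulVec ψ (star φ)).trace = 0) → ψ = 0 ∨ φ = 0) :=
  stmt_17_general d
end

section
/- In M_2(ℂ), let |+⟩ = (|0⟩+|1⟩)/√2, |−⟩ = (|0⟩−|1⟩)/√2, |i₊⟩ = (|0⟩+i|1⟩)/√2, and let X, Y, Z be the Pauli matrices. Then: (i) span{|+⟩⟨+|, |−⟩⟨−|, |i₊⟩⟨i₊|} = span{I_2, X, Y}; (ii) the Hilbert–Schmidt orthogonal complement of this 3-dimensional subspace is ℂ·Z; and (iii) no nonzero scalar multiple of Z is a rank-one matrix. Hence {|+⟩⟨+|, |−⟩⟨−|, |i₊⟩⟨i₊|} is an unextendible set of rank-one matrices in M_2(ℂ). -/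
/-! The three projectors are ½(1 + X), ½(1 − X) and ½(1 + Y), so they span the same space
as 1, X, Y. Testing against 1, X, Y forces tr M = 0 and M₀₁ = M₁₀ = 0, which leaves exactly
ℂ·Z. Finally a rank-one matrix u v† has determinant 0, while det (c Z) = −c². -/

open Matrix

/-- `|i₊⟩ = (|0⟩ + i|1⟩)/√2`. -/
noncomputable def ketI : Fin 2 → ℂ := ![(Real.sqrt 2 : ℂ)⁻¹, Complex.I * (Real.sqrt 2 : ℂ)⁻¹]

/-- Pauli `X`. -/
noncomputable def pauliX : Matrix (Fin 2) (Fin 2) ℂ := !![0, 1; 1, 0]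

/-- Pauli `Y`. -/
noncomputable def pauliY : Matrix (Fin 2) (Fin 2) ℂ := !![0, -Complex.I; Complex.I, 0]

/-- Pauli `Z`. -/
noncomputable def pauliZ : Matrix (Fin 2) (Fin 2) ℂ := !![1, 0; 0, -1]

lemma Submodule.span_add_sub_add {K V : Type*} [Field K] [AddCommGroup V] [Module K V]
    (h2 : (2 : K) ≠ 0) (a b c : V) :
    Submodule.span K {a + b, a - b, a + c} = Submodule.span K {a, b, c} := by
  apply le_antisymm <;> rw [Submodule.span_le] <;> intro x hx <;>
    simp only [Set.mem_insert_iff, Set.mem_singleton_iff] at hx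
  · have ha : a ∈ Submodule.span K {a, b, c} := Submodule.subset_span (by simp)
    have hb : b ∈ Submodule.span K {a, b, c} := Submodule.subset_span (by simp)
    have hc : c ∈ Submodule.span K {a, b, c} := Submodule.subset_span (by simp)
    rcases hx with rfl | rfl | rfl
    · exact add_mem ha hb
    · exact sub_mem ha hb
    · exact add_mem ha hc
  · have hp : a + b ∈ Submodule.span K {a + b, a - b, a + c} := Submodule.subset_span (by simp)
    have hm : a - b ∈ Submodule.span K {a + b, a - b, a + c} := Submodule.subset_span (by simp)
    have hc : a + c ∈ Submodule.span K {a + b, a - b, a + c} := Submodule.subset_span (by simp)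
    have ha := smul_mem _ (2⁻¹ : K) (add_mem hp hm)
    rw [add_add_sub_cancel, ← two_smul K a, inv_smul_smul₀ h2] at ha
    rcases hx with rfl | rfl | rfl
    · exact ha
    · have hb := smul_mem _ (2⁻¹ : K) (sub_mem hp hm)
      rwa [add_sub_sub_cancel, ← two_smul K x, inv_smul_smul₀ h2] at hb
    · simpa using sub_mem hc ha

lemma Submodule.span_smul_triple {R M : Type*} [CommSemiring R] [AddCommMonoid M] [Module R M]
    {r : R} (hr : IsUnit r) (a b c : M) :
    Submodule.span R {r • a, r • b, r • c} = Submodule.span R {a, b, c} := by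
  rw [← Submodule.span_smul_eq_of_isUnit {a, b, c} r hr, Set.smul_set_insert, Set.smul_set_insert,
    Set.smul_set_singleton]

lemma Matrix.forall_mem_span_trace_conjTranspose_mul_eq_zero_iff {n R : Type*} [Fintype n]
    [CommSemiring R] [StarRing R] {S : Set (Matrix n n R)} {M : Matrix n n R} :
    (∀ A ∈ Submodule.span R S, (Aᴴ * M).trace = 0) ↔ ∀ A ∈ S, (Aᴴ * M).trace = 0 := by
  refine ⟨fun h A hA ↦ h A (Submodule.subset_span hA), fun h A hA ↦ ?_⟩
  induction hA using Submodule.span_induction with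
  | mem A hA => exact h A hA
  | zero => simp
  | add A B _ _ hA hB => rw [conjTranspose_add, add_mul, trace_add, hA, hB, add_zero]
  | smul r A _ hA => rw [conjTranspose_smul, smul_mul, trace_smul, hA, smul_zero]

lemma ofReal_sqrt_two_sq : (Real.sqrt 2 : ℂ) ^ 2 = 2 := by
  rw [← Complex.ofReal_pow, Real.sq_sqrt zero_le_two, Complex.ofReal_ofNat]

lemma vecMulVec_ketP : vecMulVec ketP (star ketP) = (2 : ℂ)⁻¹ • (1 + pauliX) := by
  ext i j
  fin_cases i <;> fin_cases j <;> simp [vecMulVec_apply, ketP, pauliX, ← sq, ofReal_sqrt_two_sq]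

lemma vecMulVec_ketM : vecMulVec ketM (star ketM) = (2 : ℂ)⁻¹ • (1 - pauliX) := by
  ext i j
  fin_cases i <;> fin_cases j <;> simp [vecMulVec_apply, ketM, pauliX, ← sq, ofReal_sqrt_two_sq]

lemma vecMulVec_ketI : vecMulVec ketI (star ketI) = (2 : ℂ)⁻¹ • (1 + pauliY) := by
  ext i j
  fin_cases i <;> fin_cases j <;> simp [vecMulVec_apply, ketI, pauliY] <;> ring_nf <;>
    simp [ofReal_sqrt_two_sq, mul_comm]

lemma pauliX_conjTranspose : pauliXᴴ = pauliX := by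
  ext i j; fin_cases i <;> fin_cases j <;> simp [pauliX]

lemma pauliY_conjTranspose : pauliYᴴ = pauliY := by
  ext i j; fin_cases i <;> fin_cases j <;> simp [pauliY]

lemma trace_pauliX_mul (M : Matrix (Fin 2) (Fin 2) ℂ) : (pauliX * M).trace = M 1 0 + M 0 1 := by
  rw [eta_fin_two M]; simp [pauliX, trace_fin_two]

lemma trace_pauliY_mul (M : Matrix (Fin 2) (Fin 2) ℂ) :
    (pauliY * M).trace = Complex.I * (M 0 1 - M 1 0) := by
  rw [eta_fin_two M]; simp [pauliY, trace_fin_two]; ring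

lemma exists_eq_smul_pauliZ_iff (M : Matrix (Fin 2) (Fin 2) ℂ) :
    (∃ c : ℂ, M = c • pauliZ) ↔
      M.trace = 0 ∧ (pauliX * M).trace = 0 ∧ (pauliY * M).trace = 0 := by
  rw [trace_pauliX_mul, trace_pauliY_mul, trace_fin_two]
  constructor
  · rintro ⟨c, rfl⟩
    simp [pauliZ]
  · rintro ⟨htr, hX, hY⟩
    have hsym : M 0 1 = M 1 0 := sub_eq_zero.mp ((mul_eq_zero.mp hY).resolve_left Complex.I_ne_zero)
    have h01 : M 0 1 = 0 := by linear_combination (hX + hsym) / 2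
    refine ⟨M 0 0, ?_⟩
    ext i j
    fin_cases i <;> fin_cases j <;> simp [pauliZ, h01, ← hsym]
    linear_combination htr

lemma det_pauliZ : pauliZ.det = -1 := by
  simp [pauliZ, det_fin_two]

/-- (i) `span {|+⟩⟨+|, |−⟩⟨−|, |i₊⟩⟨i₊|} = span {I₂, X, Y}`; (ii) the
Hilbert–Schmidt orthogonal complement of this subspace is `ℂ · Z`; (iii) no nonzero scalar
multiple of `Z` is a rank-one matrix. Hence the three projectors form an unextendible set
of rank-one matrices in `M_2(ℂ)`. -/
theorem stmt_18 :
    (Submodule.span ℂ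
        ({vecMulVec ketP (star ketP), vecMulVec ketM (star ketM),
          vecMulVec ketI (star ketI)} : Set (Matrix (Fin 2) (Fin 2) ℂ)) =
      Submodule.span ℂ ({1, pauliX, pauliY} : Set (Matrix (Fin 2) (Fin 2) ℂ))) ∧
    ({M : Matrix (Fin 2) (Fin 2) ℂ |
        ∀ A ∈ Submodule.span ℂ
          ({vecMulVec ketP (star ketP), vecMulVec ketM (star ketM),
            vecMulVec ketI (star ketI)} : Set (Matrix (Fin 2) (Fin 2) ℂ)),
          (Aᴴ * M).trace = 0} =
      {M : Matrix (Fin 2) (Fin 2) ℂ | ∃ c : ℂ, M = c • pauliZ}) ∧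
    (∀ c : ℂ, c ≠ 0 →
      ¬∃ u v : Fin 2 → ℂ, u ≠ 0 ∧ v ≠ 0 ∧ c • pauliZ = vecMulVec u (star v)) := by
  have hspan : Submodule.span ℂ
        ({vecMulVec ketP (star ketP), vecMulVec ketM (star ketM),
          vecMulVec ketI (star ketI)} : Set (Matrix (Fin 2) (Fin 2) ℂ)) =
      Submodule.span ℂ ({1, pauliX, pauliY} : Set (Matrix (Fin 2) (Fin 2) ℂ)) := by
    rw [vecMulVec_ketP, vecMulVec_ketM, vecMulVec_ketI,
      Submodule.span_smul_triple (by norm_num), Submodule.span_add_sub_add two_ne_zero]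
  refine ⟨hspan, ?_, ?_⟩
  · ext M
    simp only [Set.mem_ofPred_eq, hspan, forall_mem_span_trace_conjTranspose_mul_eq_zero_iff,
      Set.forall_mem_insert, Set.mem_singleton_iff, forall_eq, conjTranspose_one, one_mul,
      pauliX_conjTranspose, pauliY_conjTranspose, exists_eq_smul_pauliZ_iff]
  · rintro c hc ⟨u, v, -, -, huv⟩
    have hdet := congrArg det huv
    rw [det_vecMulVec, det_smul, det_pauliZ] at hdet
    exact hc (by simpa using hdet.symm)
end

section
/- For every n ≥ 1, the n-fold tensor power of the subspace span{I_2, X, Y} ⊆ M_2(ℂ) is unextendible: for all nonzero vectors ψ, φ ∈ (ℂ²)^{⊗n} there exist matrices P_1, …, P_n ∈ {I_2, X, Y} such that tr[(P_1 ⊗ ⋯ ⊗ P_n)† · ψφ†] ≠ 0. Equivalently, no nonzero rank-one matrix in M_{2^n}(ℂ) is Hilbert–Schmidt orthogonal to all n-fold Kronecker products of elements of {I_2, X, Y}. (This is the statement that the quantum channel E with K(E) = span{I_2, X, Y} satisfies α(E^{⊗n}) = 1 for all n, hence C^{(0)}(E) = 0.) -/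
open Matrix

/-- The `n`-fold Kronecker tensor product of a family of `2 × 2` matrices, as a matrix
on `(ℂ²)^{⊗n} = ℂ^{2^n}`. -/
noncomputable def tensorPow {n : ℕ} (P : Fin n → Matrix (Fin 2) (Fin 2) ℂ) :
    Matrix (Fin n → Fin 2) (Fin n → Fin 2) ℂ :=
  Matrix.of fun r c => ∏ i, P i (r i) (c i)

/-!
Pair `ψ` with `φ` bilinearly through `P_1 ⊗ ⋯ ⊗ P_n`; the trace in the statement is the
conjugate of this pairing with `ψ` replaced by `star ψ`. Split `ψ` and `φ` by their first
tensor factor into slices `ψ₀, ψ₁, φ₀, φ₁` and write `B a b Q` for the pairing of `ψ_a`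
with `φ_b` through `Q`. Taking `P_1 = I, X, Y` gives `B₀₀ + B₁₁ = 0`, `B₀₁ + B₁₀ = 0` and
`i (B₁₀ - B₀₁) = 0`, so the off-diagonal pairings vanish for all `Q` and, by induction on `n`,
one of `ψ₀, φ₁` and one of `ψ₁, φ₀` is zero. In the mixed cases, say `ψ₀ = φ₀ = 0`,
`B₀₀ = 0` forces `B₁₁ = 0`, and induction once more kills `ψ₁` or `φ₁`.
-/

theorem Matrix.trace_conjTranspose_mul_vecMulVec {m R : Type*} [Fintype m] [CommSemiring R]
    [StarRing R] (A : Matrix m m R) (ψ φ : m → R) :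
    (Aᴴ * vecMulVec ψ (star φ)).trace = star (star ψ ⬝ᵥ (A *ᵥ φ)) := by
  simp only [trace, diag_apply, mul_apply, conjTranspose_apply, vecMulVec_apply, Pi.star_apply,
    dotProduct, mulVec, star_sum, star_mul, star_star, Finset.sum_mul]
  rw [Finset.sum_comm]
  exact Finset.sum_congr rfl fun _ _ => Finset.sum_congr rfl fun _ _ => by ring

theorem Fintype.sum_fin_succ_pi {α M : Type*} [Fintype α] [AddCommMonoid M] {n : ℕ}
    (g : (Fin (n + 1) → α) → M) :
    ∑ f, g f = ∑ a, ∑ r : Fin n → α, g (Fin.cons a r) := by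
  rw [← (Fin.consEquiv fun _ => α).sum_comp, Fintype.sum_prod_type]
  rfl

section HeadSlice

variable {α β : Type*} {n : ℕ}

def headSlice (ψ : (Fin (n + 1) → α) → β) (a : α) : (Fin n → α) → β :=
  fun r => ψ (Fin.cons a r)

theorem eq_zero_iff_forall_headSlice_eq_zero [Zero β] {ψ : (Fin (n + 1) → α) → β} :
    ψ = 0 ↔ ∀ a, headSlice ψ a = 0 := by
  refine ⟨fun h a => by subst h; rfl, fun h => funext fun f => ?_⟩
  rw [← Fin.cons_self_tail f]
  exact congrFun (h (f 0)) (Fin.tail f)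

end HeadSlice

theorem tensorPow_cons_apply {n : ℕ} (M : Matrix (Fin 2) (Fin 2) ℂ)
    (Q : Fin n → Matrix (Fin 2) (Fin 2) ℂ) (a b : Fin 2) (r c : Fin n → Fin 2) :
    tensorPow (Fin.cons M Q) (Fin.cons a r) (Fin.cons b c) = M a b * tensorPow Q r c := by
  simp [tensorPow, Fin.prod_univ_succ]

theorem dotProduct_tensorPow_cons_mulVec {n : ℕ} (M : Matrix (Fin 2) (Fin 2) ℂ)
    (Q : Fin n → Matrix (Fin 2) (Fin 2) ℂ) (ψ φ : (Fin (n + 1) → Fin 2) → ℂ) :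
    ψ ⬝ᵥ (tensorPow (Fin.cons M Q) *ᵥ φ) =
      ∑ a, ∑ b, M a b * (headSlice ψ a ⬝ᵥ (tensorPow Q *ᵥ headSlice φ b)) := by
  simp only [dotProduct, mulVec, Fintype.sum_fin_succ_pi, tensorPow_cons_apply, headSlice,
    Finset.mul_sum]
  refine Finset.sum_congr rfl fun a _ => ?_
  rw [Finset.sum_comm]
  exact Finset.sum_congr rfl fun _ _ => Finset.sum_congr rfl fun _ _ =>
    Finset.sum_congr rfl fun _ _ => by ring

def pauliIXY : Set (Matrix (Fin 2) (Fin 2) ℂ) := {1, pauliX, pauliY}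

def IXYPairingVanishes {n : ℕ} (ψ φ : (Fin n → Fin 2) → ℂ) : Prop :=
  ∀ P : Fin n → Matrix (Fin 2) (Fin 2) ℂ, (∀ i, P i ∈ pauliIXY) →
    ψ ⬝ᵥ (tensorPow P *ᵥ φ) = 0

namespace IXYPairingVanishes

variable {n : ℕ} {ψ φ : (Fin n → Fin 2) → ℂ}

theorem zero_left : IXYPairingVanishes (0 : (Fin n → Fin 2) → ℂ) φ :=
  fun _ _ => zero_dotProduct _

theorem eq_zero_or_eq_zero_of_fin_zero {ψ φ : (Fin 0 → Fin 2) → ℂ}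
    (h : IXYPairingVanishes ψ φ) : ψ = 0 ∨ φ = 0 := by
  have h0 := h 0 finZeroElim
  simp only [dotProduct, mulVec, Fintype.sum_unique, tensorPow, of_apply, Finset.univ_eq_empty,
    Finset.prod_empty, one_mul] at h0
  refine (mul_eq_zero.1 h0).imp (fun h => ?_) (fun h => ?_) <;>
    exact funext fun r => (congrArg _ (Subsingleton.elim r _)).trans h

theorem headSlices {ψ φ : (Fin (n + 1) → Fin 2) → ℂ} (h : IXYPairingVanishes ψ φ) :
    IXYPairingVanishes (headSlice ψ 0) (headSlice φ 1) ∧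
      IXYPairingVanishes (headSlice ψ 1) (headSlice φ 0) ∧
      (IXYPairingVanishes (headSlice ψ 0) (headSlice φ 0) ↔
        IXYPairingVanishes (headSlice ψ 1) (headSlice φ 1)) := by
  set B : Fin 2 → Fin 2 → (Fin n → Matrix (Fin 2) (Fin 2) ℂ) → ℂ :=
    fun a b Q => headSlice ψ a ⬝ᵥ (tensorPow Q *ᵥ headSlice φ b)
  have hcons : ∀ M ∈ pauliIXY, ∀ Q : Fin n → _, (∀ i, Q i ∈ pauliIXY) →
      ∑ a, ∑ b, M a b * B a b Q = 0 := fun M hM Q hQ => by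
    rw [← dotProduct_tensorPow_cons_mulVec]
    exact h _ (Fin.cases hM hQ)
  have hI : ∀ Q, (∀ i, Q i ∈ pauliIXY) → B 0 0 Q + B 1 1 Q = 0 := fun Q hQ => by
    simpa [Fin.sum_univ_two] using hcons 1 (by simp [pauliIXY]) Q hQ
  have hX : ∀ Q, (∀ i, Q i ∈ pauliIXY) → B 0 1 Q + B 1 0 Q = 0 := fun Q hQ => by
    simpa [Fin.sum_univ_two, pauliX] using hcons pauliX (by simp [pauliIXY]) Q hQ
  have hY : ∀ Q, (∀ i, Q i ∈ pauliIXY) → -Complex.I * B 0 1 Q + Complex.I * B 1 0 Q = 0 :=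
    fun Q hQ => by
      simpa [Fin.sum_univ_two, pauliY] using hcons pauliY (by simp [pauliIXY]) Q hQ
  refine ⟨fun Q hQ => ?_, fun Q hQ => ?_, forall₂_congr fun Q hQ => ?_⟩
  · linear_combination
      (hX Q hQ + Complex.I * hY Q hQ) / 2 + (B 0 1 Q - B 1 0 Q) / 2 * Complex.I_sq
  · linear_combination
      (hX Q hQ - Complex.I * hY Q hQ) / 2 + (B 1 0 Q - B 0 1 Q) / 2 * Complex.I_sq
  · show B 0 0 Q = 0 ↔ B 1 1 Q = 0
    rw [eq_neg_of_add_eq_zero_left (hI Q hQ), neg_eq_zero]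

theorem eq_zero_or_eq_zero : ∀ {n : ℕ} {ψ φ : (Fin n → Fin 2) → ℂ},
    IXYPairingVanishes ψ φ → ψ = 0 ∨ φ = 0
  | 0, _, _, h => h.eq_zero_or_eq_zero_of_fin_zero
  | n + 1, ψ, φ, h => by
    obtain ⟨h01, h10, h00_iff_h11⟩ := h.headSlices
    simp only [eq_zero_iff_forall_headSlice_eq_zero (ψ := ψ),
      eq_zero_iff_forall_headSlice_eq_zero (ψ := φ), Fin.forall_fin_two]
    rcases eq_zero_or_eq_zero h01 with hψ0 | hφ1 <;>
      rcases eq_zero_or_eq_zero h10 with hψ1 | hφ0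
    · exact .inl ⟨hψ0, hψ1⟩
    · have h11 := h00_iff_h11.1 (hψ0 ▸ zero_left)
      rcases eq_zero_or_eq_zero h11 with hψ1 | hφ1
      · exact .inl ⟨hψ0, hψ1⟩
      · exact .inr ⟨hφ0, hφ1⟩
    · have h00 := h00_iff_h11.2 (hψ1 ▸ zero_left)
      rcases eq_zero_or_eq_zero h00 with hψ0 | hφ0
      · exact .inl ⟨hψ0, hψ1⟩
      · exact .inr ⟨hφ0, hφ1⟩
    · exact .inr ⟨hφ0, hφ1⟩

end IXYPairingVanishes

theorem stmt_19_general (n : ℕ) (ψ φ : (Fin n → Fin 2) → ℂ)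
    (hψ : ψ ≠ 0) (hφ : φ ≠ 0) :
    ∃ P : Fin n → Matrix (Fin 2) (Fin 2) ℂ,
      (∀ i, P i ∈ ({1, pauliX, pauliY} : Set (Matrix (Fin 2) (Fin 2) ℂ))) ∧
      ((tensorPow P)ᴴ * vecMulVec ψ (star φ)).trace ≠ 0 := by
  by_contra! h
  have hvan : IXYPairingVanishes (star ψ) φ := fun P hP => by
    rw [← star_eq_zero, ← trace_conjTranspose_mul_vecMulVec]
    exact h P hP
  exact hvan.eq_zero_or_eq_zero.elim (fun hψ' => hψ (star_eq_zero.1 hψ')) hφ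

/-- for every `n ≥ 1`, the `n`-fold tensor power of `span {I₂, X, Y}` is
unextendible: for all nonzero `ψ, φ ∈ (ℂ²)^{⊗n}` some Kronecker product
`P_1 ⊗ ⋯ ⊗ P_n` of elements of `{I₂, X, Y}` has nonzero Hilbert–Schmidt inner product
with `ψφ†`. -/
theorem stmt_19 (n : ℕ) (hn : 1 ≤ n) (ψ φ : (Fin n → Fin 2) → ℂ)
    (hψ : ψ ≠ 0) (hφ : φ ≠ 0) :
    ∃ P : Fin n → Matrix (Fin 2) (Fin 2) ℂ,
      (∀ i, P i ∈ ({1, pauliX, pauliY} : Set (Matrix (Fin 2) (Fin 2) ℂ))) ∧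
      ((tensorPow P)ᴴ * vecMulVec ψ (star φ)).trace ≠ 0 :=
  stmt_19_general n ψ φ hψ hφ
end
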